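/- In the same (P₆, HHD)-free C_k setup: if d_i is not adjacent to x_i, then d_i is not adjacent to x_{i+1}; symmetrically, if d_i is not adjacent to x_{i-1} then d_i is not adjacent to x_{i-2}. -/

import Mathlib

open SimpleGraph Finset

variable {V : Type*}

/-- The square of a graph `G`: two distinct vertices are adjacent iff
their distance in `G` is 1 or 2. -/
def square (G : SimpleGraph V) : SimpleGraph V where
  Adj u v := u ≠ v ∧ (G.Adj u v ∨ ∃ w, G.Adj u w ∧ G.Adj w v)
  symm := ⟨by
    rintro u v ⟨h, h2 | ⟨w, hw1, hw2⟩⟩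
    · exact ⟨h.symm, Or.inl h2.symm⟩
    · exact ⟨h.symm, Or.inr ⟨w, hw2.symm, hw1.symm⟩⟩⟩
  loopless := ⟨by rintro u ⟨h, _⟩; exact h rfl⟩

/-- `D` is an efficient dominating set of `G`: every vertex is dominated
(by closed neighborhoods) by exactly one vertex of `D`. -/
def IsEDS (G : SimpleGraph V) (D : Set V) : Prop :=
  ∀ v : V, ∃! d : V, d ∈ D ∧ (d = v ∨ G.Adj d v)

/-- `G` has no induced subgraph isomorphic to `H`. -/
def Free {W : Type*} (G : SimpleGraph V) (H : SimpleGraph W) : Prop :=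
  IsEmpty (H ↪g G)

/-- The house: the complement of the path on five vertices. -/
def house : SimpleGraph (Fin 5) := (pathGraph 5)ᶜ

/-- The domino: a `P₅` `x₁ … x₅` together with a vertex adjacent to `x₁, x₃, x₅`. -/
def domino : SimpleGraph (Fin 6) :=
  SimpleGraph.fromRel (fun i j =>
    (i, j) ∈ [((0 : Fin 6), (1 : Fin 6)), (1, 2), (2, 3), (3, 4), (5, 0), (5, 2), (5, 4)])

/-- A graph is hole-free if it contains no induced cycle `C_k`, `k ≥ 5`. -/
def HoleFree (G : SimpleGraph V) : Prop := ∀ k, 5 ≤ k → _root_.Free G (cycleGraph k)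

/-- A graph is chordal if it contains no induced cycle `C_k`, `k ≥ 4`. -/
def Chordal (G : SimpleGraph V) : Prop := ∀ k, 4 ≤ k → _root_.Free G (cycleGraph k)

/-!
Suppose `d 0` misses `x 0` but sees `x 1`. Two houses force `d 0` to see `v 1` and `x (-1)`.
The dominators `d 2` and `d (-1)` of `v 2` and `v (-1)` then differ from `d 0`, so by
efficiency they miss every neighbour of `d 0`; two more houses show that both miss `x 0`, and
the `P₆` `v 0 - x 0 - x 1 - v 2 - d 2 - v (-1)` shows that `d 2` misses `v (-1)`. Then
`d 2 - v 2 - x 1 - x (-1) - v (-1) - d (-1)` is an induced `P₆`, or, if `x 1` and `x (-1)` are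
not adjacent, `v 2 - x 1 - x 0 - x (-1) - v (-1) - d (-1)` is. Rotating and reflecting the
cycle moves this configuration to any index and to the other side.
-/

-- Injectivity of `H.neighborSet` makes `f` injective, so no distinctness hypotheses are needed.
theorem Free.false_of_adj_iff {W : Type*} {G : SimpleGraph V} {H : SimpleGraph W}
    (hG : _root_.Free G H) (hH : Function.Injective H.neighborSet) (f : W → V)
    (hf : ∀ p q, G.Adj (f p) (f q) ↔ H.Adj p q) : False :=
  hG.false ⟨⟨f, fun p q hpq => hH <| Set.ext fun r => by
    rw [mem_neighborSet, mem_neighborSet, ← hf, ← hf, hpq]⟩, hf _ _⟩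

theorem house_neighborSet_injective : Function.Injective house.neighborSet := by
  intro p q h
  simp only [Set.ext_iff, mem_neighborSet] at h
  revert p q
  simp only [house, compl_adj, pathGraph_adj]
  decide

theorem pathGraph_six_neighborSet_injective : Function.Injective (pathGraph 6).neighborSet := by
  intro p q h
  simp only [Set.ext_iff, mem_neighborSet] at h
  revert p q
  simp only [pathGraph_adj]
  decide

theorem Free.false_of_house {G : SimpleGraph V} (hG : _root_.Free G house) {a b c d e : V}
    (hac : G.Adj a c) (had : G.Adj a d) (hae : G.Adj a e)
    (hbd : G.Adj b d) (hbe : G.Adj b e) (hce : G.Adj c e)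
    (hab : ¬ G.Adj a b) (hbc : ¬ G.Adj b c) (hcd : ¬ G.Adj c d) (hde : ¬ G.Adj d e) : False := by
  refine hG.false_of_adj_iff house_neighborSet_injective ![a, b, c, d, e] fun p q => ?_
  fin_cases p <;> fin_cases q <;>
    simp [house, pathGraph_adj, hac, had, hae, hbd, hbe, hce, hac.symm, had.symm, hae.symm,
      hbd.symm, hbe.symm, hce.symm, hab, hbc, hcd, hde, mt Adj.symm hab, mt Adj.symm hbc,
      mt Adj.symm hcd, mt Adj.symm hde]

theorem Free.false_of_pathGraph_six {G : SimpleGraph V} (hG : _root_.Free G (pathGraph 6))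
    {a b c d e f : V}
    (hab : G.Adj a b) (hbc : G.Adj b c) (hcd : G.Adj c d) (hde : G.Adj d e) (hef : G.Adj e f)
    (hac : ¬ G.Adj a c) (had : ¬ G.Adj a d) (hae : ¬ G.Adj a e) (haf : ¬ G.Adj a f)
    (hbd : ¬ G.Adj b d) (hbe : ¬ G.Adj b e) (hbf : ¬ G.Adj b f)
    (hce : ¬ G.Adj c e) (hcf : ¬ G.Adj c f) (hdf : ¬ G.Adj d f) : False := by
  refine hG.false_of_adj_iff pathGraph_six_neighborSet_injective ![a, b, c, d, e, f]
    fun p q => ?_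
  fin_cases p <;> fin_cases q <;>
    simp [pathGraph_adj, hab, hbc, hcd, hde, hef, hab.symm, hbc.symm, hcd.symm, hde.symm,
      hef.symm, hac, had, hae, haf, hbd, hbe, hbf, hce, hcf, hdf, mt Adj.symm hac,
      mt Adj.symm had, mt Adj.symm hae, mt Adj.symm haf, mt Adj.symm hbd, mt Adj.symm hbe,
      mt Adj.symm hbf, mt Adj.symm hce, mt Adj.symm hcf, mt Adj.symm hdf]

theorem IsEDS.eq_of_adj {G : SimpleGraph V} {D : Set V} (hD : IsEDS G D) {u w₁ w₂ : V}
    (h₁ : w₁ ∈ D) (h₂ : w₂ ∈ D) (hu₁ : G.Adj w₁ u) (hu₂ : G.Adj w₂ u) : w₁ = w₂ :=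
  (hD u).unique ⟨h₁, Or.inr hu₁⟩ ⟨h₂, Or.inr hu₂⟩

theorem IsEDS.not_adj {G : SimpleGraph V} {D : Set V} (hD : IsEDS G D) {w₁ w₂ : V}
    (h₁ : w₁ ∈ D) (h₂ : w₂ ∈ D) : ¬ G.Adj w₁ w₂ := fun h =>
  h.ne ((hD w₂).unique ⟨h₁, Or.inr h⟩ ⟨h₂, Or.inl rfl⟩)

/-- The real vertices `v i` of an induced `C_k` of `G²` together with auxiliary vertices `x i`,
each a common neighbour of `v i` and `v (i + 1)`, consecutive ones adjacent. -/
structure InducedSquareCycle (G : SimpleGraph V) {k : ℕ} (v x : ZMod k → V) : Prop where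
  four_le : 4 ≤ k
  injective : Function.Injective v
  dist_eq_two : ∀ i, G.dist (v i) (v (i + 1)) = 2
  not_adj_square : ∀ i j, j ≠ i - 1 → j ≠ i → j ≠ i + 1 → ¬ (square G).Adj (v i) (v j)
  v_adj_x : ∀ i, G.Adj (v i) (x i)
  x_adj_v_add_one : ∀ i, G.Adj (x i) (v (i + 1))
  x_adj_x_add_one : ∀ i, G.Adj (x i) (x (i + 1))

namespace InducedSquareCycle

variable {G : SimpleGraph V} {k : ℕ} {v x : ZMod k → V}

theorem rotate (C : InducedSquareCycle G v x) (i : ZMod k) :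
    InducedSquareCycle G (fun j => v (i + j)) (fun j => x (i + j)) where
  four_le := C.four_le
  injective := C.injective.comp (add_right_injective i)
  dist_eq_two j := by simpa only [add_assoc] using C.dist_eq_two (i + j)
  not_adj_square a b h₁ h₂ h₃ := C.not_adj_square (i + a) (i + b)
    (by rwa [add_sub_assoc, Ne, add_right_inj]) (by rwa [Ne, add_right_inj])
    (by rwa [add_assoc, Ne, add_right_inj])
  v_adj_x j := C.v_adj_x (i + j)
  x_adj_v_add_one j := by simpa only [add_assoc] using C.x_adj_v_add_one (i + j)
  x_adj_x_add_one j := by simpa only [add_assoc] using C.x_adj_x_add_one (i + j)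

theorem reflect (C : InducedSquareCycle G v x) (i : ZMod k) :
    InducedSquareCycle G (fun j => v (i - j)) (fun j => x (i - (j + 1))) := by
  have e (j : ZMod k) : i - (j + 1) + 1 = i - j := by ring
  refine ⟨C.four_le, C.injective.comp sub_right_injective, fun j => ?_,
    fun a b h₁ h₂ h₃ => C.not_adj_square (i - a) (i - b) ?_ ?_ ?_, fun j => ?_,
    fun j => (C.v_adj_x _).symm, fun j => ?_⟩
  · rw [SimpleGraph.dist_comm, ← C.dist_eq_two, e]
  · exact fun h => h₃ (by linear_combination -h)
  · exact fun h => h₂ (by linear_combination -h)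
  · exact fun h => h₁ (by linear_combination -h)
  · simpa only [e] using (C.x_adj_v_add_one (i - (j + 1))).symm
  · simpa only [e] using (C.x_adj_x_add_one (i - (j + 1 + 1))).symm

theorem v_not_adj_v (C : InducedSquareCycle G v x) (a b : ZMod k) : ¬ G.Adj (v a) (v b) := by
  intro h
  by_cases hb : b = a + 1
  · have := C.dist_eq_two a
    rw [← hb, dist_eq_one_iff_adj.mpr h] at this
    omega
  by_cases ha : a = b + 1
  · have := C.dist_eq_two b
    rw [← ha, dist_eq_one_iff_adj.mpr h.symm] at this
    omega
  by_cases hab : b = a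
  · exact h.ne (congrArg v hab.symm)
  exact C.not_adj_square a b (fun h' => ha (by linear_combination -h')) hab hb ⟨h.ne, Or.inl h⟩

theorem not_adj_v_add_two (C : InducedSquareCycle G v x) {a : ZMod k} {u : V}
    (h : G.Adj (v a) u) : ¬ G.Adj u (v (a + 2)) := by
  have ne_zero (n : ℕ) (h₀ : n ≠ 0) (h₄ : n < 4) : (n : ZMod k) ≠ 0 := by
    rw [Ne, ZMod.natCast_eq_zero_iff]
    exact fun hdvd => by have := Nat.le_of_dvd (by omega) hdvd; have := C.four_le; omega
  have h₁ : (1 : ZMod k) ≠ 0 := by exact_mod_cast ne_zero 1 (by norm_num) (by norm_num)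
  have h₂ : (2 : ZMod k) ≠ 0 := by exact_mod_cast ne_zero 2 (by norm_num) (by norm_num)
  have h₃ : (3 : ZMod k) ≠ 0 := by exact_mod_cast ne_zero 3 (by norm_num) (by norm_num)
  intro h'
  refine C.not_adj_square a (a + 2) (fun e => h₃ (by linear_combination e))
    (fun e => h₂ (by linear_combination e)) (fun e => h₁ (by linear_combination e))
    ⟨C.injective.ne fun e => h₂ (by linear_combination -e), Or.inr ⟨u, h, h'⟩⟩

theorem x_not_adj_v_add_two (C : InducedSquareCycle G v x) (a : ZMod k) :
    ¬ G.Adj (x a) (v (a + 2)) :=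
  C.not_adj_v_add_two (C.v_adj_x a)

theorem x_not_adj_v_add_three (C : InducedSquareCycle G v x) (a : ZMod k) :
    ¬ G.Adj (x a) (v (a + 3)) := by
  simpa only [add_assoc, show (1 + 2 : ZMod k) = 3 by norm_num] using
    C.not_adj_v_add_two (C.x_adj_v_add_one a).symm

theorem x_not_adj_v_sub_one (C : InducedSquareCycle G v x) (a : ZMod k) :
    ¬ G.Adj (x a) (v (a - 1)) := fun h => by
  have := C.not_adj_v_add_two h.symm
  rw [show a - 1 + 2 = a + 1 by ring] at this
  exact this (C.x_adj_v_add_one a)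

theorem x_not_adj_v_sub_two (C : InducedSquareCycle G v x) (a : ZMod k) :
    ¬ G.Adj (x a) (v (a - 2)) := fun h => by
  have := C.not_adj_v_add_two h.symm
  rw [sub_add_cancel] at this
  exact this (C.v_adj_x a).symm

theorem adj_v_one_of_adj_x_one (C : InducedSquareCycle G v x) (hH : _root_.Free G house) {u : V}
    (hu : G.Adj u (v 0)) (hx0 : ¬ G.Adj u (x 0)) (hx1 : G.Adj u (x 1)) : G.Adj u (v 1) := by
  by_contra hv1
  exact hH.false_of_house (by simpa using C.x_adj_v_add_one 0) (C.v_adj_x 0).symm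
    (by simpa using C.x_adj_x_add_one 0) hu hx1 (C.v_adj_x 1) (mt Adj.symm hx0) hv1
    (C.v_not_adj_v 1 0) fun h => C.x_not_adj_v_sub_one 1 (by simpa using h.symm)

theorem adj_x_neg_one_of_adj_v_one (C : InducedSquareCycle G v x) (hH : _root_.Free G house)
    {u : V} (hu : G.Adj u (v 0)) (hx0 : ¬ G.Adj u (x 0)) (hv1 : G.Adj u (v 1)) :
    G.Adj u (x (-1)) := by
  by_contra hxm
  exact hH.false_of_house (by simpa using (C.x_adj_v_add_one (-1)).symm) hu.symm (C.v_adj_x 0)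
    hv1.symm (by simpa using (C.x_adj_v_add_one 0).symm) (by simpa using C.x_adj_x_add_one (-1))
    (C.v_not_adj_v 0 1) (fun h => C.x_not_adj_v_add_two (-1) (by norm_num [h.symm]))
    (mt Adj.symm hxm) hx0

theorem not_adj_x_zero_of_adj_v_two (C : InducedSquareCycle G v x) (hH : _root_.Free G house)
    {u : V} (hu : G.Adj u (v 2)) (hv1 : ¬ G.Adj u (v 1)) (hx1 : ¬ G.Adj u (x 1)) :
    ¬ G.Adj u (x 0) := fun hx0 =>
  hH.false_of_house (by simpa using C.x_adj_v_add_one 0) hx0.symm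
    (by simpa using C.x_adj_x_add_one 0) hu.symm
    (by simpa [one_add_one_eq_two] using (C.x_adj_v_add_one 1).symm) (C.v_adj_x 1)
    (by simpa using C.x_not_adj_v_add_two 0) (C.v_not_adj_v 2 1) (mt Adj.symm hv1) hx1

theorem not_adj_x_zero_of_adj_v_neg_one (C : InducedSquareCycle G v x)
    (hH : _root_.Free G house) {u : V} (hu : G.Adj u (v (-1))) (hv0 : ¬ G.Adj u (v 0))
    (hxm : ¬ G.Adj u (x (-1))) : ¬ G.Adj u (x 0) := fun hx0 =>
  hH.false_of_house (by simpa using C.x_adj_v_add_one (-1)) (C.v_adj_x (-1)).symm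
    (by simpa using C.x_adj_x_add_one (-1)) hu hx0 (C.v_adj_x 0) (mt Adj.symm hxm) hv0
    (C.v_not_adj_v 0 (-1)) fun h => C.x_not_adj_v_sub_one 0 (by simpa using h.symm)

theorem not_adj_v_neg_one_of_adj_v_two (C : InducedSquareCycle G v x)
    (h6 : _root_.Free G (pathGraph 6)) {w : V} (hw : G.Adj w (v 2)) (hv0 : ¬ G.Adj w (v 0))
    (hx0 : ¬ G.Adj w (x 0)) (hx1 : ¬ G.Adj w (x 1)) : ¬ G.Adj w (v (-1)) := fun hwm =>
  h6.false_of_pathGraph_six (C.v_adj_x 0) (by simpa using C.x_adj_x_add_one 0)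
    (by simpa [one_add_one_eq_two] using C.x_adj_v_add_one 1) hw.symm hwm
    (fun h => C.x_not_adj_v_sub_one 1 (by simpa using h.symm)) (C.v_not_adj_v 0 2)
    (mt Adj.symm hv0) (C.v_not_adj_v 0 (-1)) (by simpa using C.x_not_adj_v_add_two 0)
    (mt Adj.symm hx0) (by simpa using C.x_not_adj_v_sub_one 0) (mt Adj.symm hx1)
    (fun h => C.x_not_adj_v_sub_two 1 (by norm_num [h])) (C.v_not_adj_v 2 (-1))

theorem adj_of_adj_v_neg_one_of_adj_v_two (C : InducedSquareCycle G v x)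
    (h6 : _root_.Free G (pathGraph 6)) {u w : V} (hu : G.Adj u (v (-1))) (hw : G.Adj w (v 2))
    (huxm : ¬ G.Adj u (x (-1))) (hux0 : ¬ G.Adj u (x 0)) (hux1 : ¬ G.Adj u (x 1))
    (huv2 : ¬ G.Adj u (v 2)) (hwxm : ¬ G.Adj w (x (-1))) (hwx1 : ¬ G.Adj w (x 1))
    (hwvm : ¬ G.Adj w (v (-1))) : G.Adj w u := by
  by_contra hwu
  have hv2x1 : G.Adj (v 2) (x 1) := by
    simpa [one_add_one_eq_two] using (C.x_adj_v_add_one 1).symm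
  have hv2xm : ¬ G.Adj (v 2) (x (-1)) := fun h =>
    C.x_not_adj_v_add_three (-1) (by norm_num [h.symm])
  have hx1vm : ¬ G.Adj (x 1) (v (-1)) := fun h => C.x_not_adj_v_sub_two 1 (by norm_num [h])
  by_cases hxx : G.Adj (x 1) (x (-1))
  · exact h6.false_of_pathGraph_six hw hv2x1 hxx (C.v_adj_x (-1)).symm hu.symm hwx1 hwxm hwvm
      hwu hv2xm (C.v_not_adj_v 2 (-1)) (mt Adj.symm huv2) hx1vm (mt Adj.symm hux1)
      (mt Adj.symm huxm)
  · exact h6.false_of_pathGraph_six hv2x1 (by simpa using (C.x_adj_x_add_one 0).symm)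
      (by simpa using (C.x_adj_x_add_one (-1)).symm) (C.v_adj_x (-1)).symm hu.symm
      (fun h => C.x_not_adj_v_add_two 0 (by simpa using h.symm)) hv2xm (C.v_not_adj_v 2 (-1))
      (mt Adj.symm huv2) hxx hx1vm (mt Adj.symm hux1) (by simpa using C.x_not_adj_v_sub_one 0)
      (mt Adj.symm hux0) (mt Adj.symm huxm)

theorem not_adj_x_one_of_not_adj_x_zero (C : InducedSquareCycle G v x)
    (h6 : _root_.Free G (pathGraph 6)) (hH : _root_.Free G house) {D : Set V} (hD : IsEDS G D)
    {d : ZMod k → V} (hdD : ∀ i, d i ∈ D) (hdv : ∀ i, G.Adj (d i) (v i))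
    (hx0 : ¬ G.Adj (d 0) (x 0)) : ¬ G.Adj (d 0) (x 1) := by
  intro hx1
  have hv1 := C.adj_v_one_of_adj_x_one hH (hdv 0) hx0 hx1
  have hxm := C.adj_x_neg_one_of_adj_v_one hH (hdv 0) hx0 hv1
  have h2 {y : V} (hy : G.Adj (d 0) y) : ¬ G.Adj (d 2) y := fun h => by
    have hd := hD.eq_of_adj (hdD 2) (hdD 0) h hy
    exact C.not_adj_v_add_two (hdv 0).symm (by rw [zero_add, ← hd]; exact hdv 2)
  have hm {y : V} (hy : G.Adj (d 0) y) : ¬ G.Adj (d (-1)) y := fun h => by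
    have hd := hD.eq_of_adj (hdD (-1)) (hdD 0) h hy
    exact C.not_adj_v_add_two (hd ▸ hdv (-1)).symm (by norm_num [hv1])
  have hw0 := C.not_adj_x_zero_of_adj_v_two hH (hdv 2) (h2 hv1) (h2 hx1)
  have hwm := C.not_adj_v_neg_one_of_adj_v_two h6 (hdv 2) (h2 (hdv 0)) hw0 (h2 hx1)
  have hu0 := C.not_adj_x_zero_of_adj_v_neg_one hH (hdv (-1)) (hm (hdv 0)) (hm hxm)
  have huv2 : ¬ G.Adj (d (-1)) (v 2) := fun h =>
    hwm (hD.eq_of_adj (hdD (-1)) (hdD 2) h (hdv 2) ▸ hdv (-1))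
  exact hD.not_adj (hdD 2) (hdD (-1)) <| C.adj_of_adj_v_neg_one_of_adj_v_two h6 (hdv (-1))
    (hdv 2) (hm hxm) hu0 (hm hx1) huv2 (h2 hxm) (h2 hx1) hwm

end InducedSquareCycle

theorem stmt7_general (G : SimpleGraph V) (h6 : _root_.Free G (pathGraph 6)) (hH : _root_.Free G house)
    (D : Set V) (hED : IsEDS G D)
    (k : ℕ) (hk : 4 ≤ k) (v : ZMod k → V) (hinj : Function.Injective v)
    (hnon : ∀ i j : ZMod k, j ≠ i - 1 → j ≠ i → j ≠ i + 1 → ¬ (square G).Adj (v i) (v j))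
    (x : ZMod k → V) (hd2 : ∀ i : ZMod k, G.dist (v i) (v (i + 1)) = 2)
    (hx : ∀ i : ZMod k, G.Adj (v i) (x i) ∧ G.Adj (x i) (v (i + 1)))
    (hxadj : ∀ i : ZMod k, G.Adj (x i) (x (i + 1)))
    (d : ZMod k → V) (hdD : ∀ i : ZMod k, d i ∈ D)
    (hdv : ∀ i : ZMod k, G.Adj (d i) (v i)) :
    ∀ i : ZMod k,
      (¬ G.Adj (d i) (x i) → ¬ G.Adj (d i) (x (i + 1))) ∧
      (¬ G.Adj (d i) (x (i - 1)) → ¬ G.Adj (d i) (x (i - 2))) := by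
  have C : InducedSquareCycle G v x :=
    ⟨hk, hinj, hd2, hnon, fun i => (hx i).1, fun i => (hx i).2, hxadj⟩
  intro i
  constructor
  · simpa using (C.rotate i).not_adj_x_one_of_not_adj_x_zero h6 hH hED
      (d := fun j => d (i + j)) (fun _ => hdD _) (fun _ => hdv _)
  · simpa [one_add_one_eq_two] using (C.reflect i).not_adj_x_one_of_not_adj_x_zero h6 hH hED
      (d := fun j => d (i - j)) (fun _ => hdD _) (fun _ => hdv _)

theorem stmt7 (G : SimpleGraph V) (h6 : _root_.Free G (pathGraph 6)) (hH : _root_.Free G house)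
    (hhole : HoleFree G) (hdom : _root_.Free G domino)
    (D : Set V) (hED : IsEDS G D)
    (k : ℕ) (hk : 4 ≤ k) (v : ZMod k → V) (hinj : Function.Injective v)
    (hadj : ∀ i : ZMod k, (square G).Adj (v i) (v (i + 1)))
    (hnon : ∀ i j : ZMod k, j ≠ i - 1 → j ≠ i → j ≠ i + 1 → ¬ (square G).Adj (v i) (v j))
    (x : ZMod k → V) (hd2 : ∀ i : ZMod k, G.dist (v i) (v (i + 1)) = 2)
    (hx : ∀ i : ZMod k, G.Adj (v i) (x i) ∧ G.Adj (x i) (v (i + 1)))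
    (hxadj : ∀ i : ZMod k, G.Adj (x i) (x (i + 1)))
    (hDout : ∀ i : ZMod k, v i ∉ D ∧ x i ∉ D)
    (d : ZMod k → V) (hdD : ∀ i : ZMod k, d i ∈ D)
    (hdv : ∀ i : ZMod k, G.Adj (d i) (v i))
    (hout : ∀ i j : ZMod k, d i ≠ v j ∧ d i ≠ x j) :
    ∀ i : ZMod k,
      (¬ G.Adj (d i) (x i) → ¬ G.Adj (d i) (x (i + 1))) ∧
      (¬ G.Adj (d i) (x (i - 1)) → ¬ G.Adj (d i) (x (i - 2))) :=
  stmt7_general G h6 hH D hED k hk v hinj hnon x hd2 hx hxadj d hdD hdv
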